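/- arXiv:1101.3629 — 6 statements merged into one kernel-verified Lean document; each statement's English description precedes it below -/
import Mathlib

section
/- If S ⊆ (Fin q ⊕ {*})^n is an H(n,q,w,t) design and R ⊆ (Fin q')^w is an MDS code with distance w−t+1 (i.e., an H(w,q',w,t) design), then the set T of words in (Fin (q·q') ⊕ {*})^n obtained by pairing each codeword a ∈ S with each b ∈ R — placing the pair (a_i, b_j) in the i-th position where j indexes the non-star positions of a in order, and keeping * in the star positions of a — is an H(n,q·q',w,t) design. -/
/-- Weight of a word over `Option α`: number of non-star (non-`none`) positions. -/
def wt {n : ℕ} {α : Type*} (u : Fin n → Option α) : ℕ :=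
  (Finset.univ.filter fun i => ((u i).isSome : Prop)).card

/-- `SubFace v u` : the face of `v` is contained in the face of `u`, i.e. `v` agrees with `u`
on all non-star positions of `u`. -/
def SubFace {n : ℕ} {α : Type*} (v u : Fin n → Option α) : Prop :=
  ∀ i, ((u i).isSome : Prop) → v i = u i

/-- `H(n,q,w,t)` design over alphabet `α` (with `q = #α`): a set of weight-`w` words such that
every weight-`t` word contains exactly one of them. -/
def IsH (n w t : ℕ) (α : Type*) (S : Set (Fin n → Option α)) : Prop :=
  (∀ s ∈ S, wt s = w) ∧
  ∀ u : Fin n → Option α, wt u = t → ∃! s, s ∈ S ∧ SubFace s u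

/-- `A(n,q,w,t)` design over alphabet `α`: a set of weight-`t` words such that every
weight-`w` word is contained in exactly one of them. -/
def IsA (n w t : ℕ) (α : Type*) (S : Set (Fin n → Option α)) : Prop :=
  (∀ s ∈ S, wt s = t) ∧
  ∀ v : Fin n → Option α, wt v = w → ∃! s, s ∈ S ∧ SubFace v s

/-- Pairing construction: given a word `a` of weight `m` over `Option (Fin q)` and a tuple
`b : Fin m → Fin q'`, place the pair `(a i, b j)` (encoded in `Fin (q*q')`) at the `i`-th
non-star position of `a`, where `j` is the rank of `i` among the non-star positions of `a`. -/
noncomputable def pairWord {n q q' m : ℕ} (a : Fin n → Option (Fin q))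
    (b : Fin m → Fin q') (h : wt a = m) : Fin n → Option (Fin (q * q')) :=
  fun i =>
    if hi : ((a i).isSome : Prop) then
      some (finProdFinEquiv ((a i).get hi,
        b (((Finset.univ.filter fun j => ((a j).isSome : Prop)).orderIsoOfFin h).symm
          ⟨i, Finset.mem_filter.mpr ⟨Finset.mem_univ i, hi⟩⟩)))
    else none

/-!
A weight-`t` face `u` over `Fin (q * q')` projects to the weight-`t` face of its first
components, which contains a unique `a ∈ S`. The non-star positions of `u` lie among those of
`a`, so the second components of `u`, read along the non-star positions of `a`, form a
weight-`t` face over `Fin q'`, which contains a unique `b ∈ R`. A paired word lies in `u` exactly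
when both of its components lie in the corresponding faces, which gives existence and uniqueness.
-/

section Words

variable {n m : ℕ} {α β : Type*}

def nonStars (a : Fin n → Option α) : Finset (Fin n) :=
  Finset.univ.filter fun i => ((a i).isSome : Prop)

lemma mem_nonStars {a : Fin n → Option α} {i : Fin n} :
    i ∈ nonStars a ↔ ((a i).isSome : Prop) := by
  simp [nonStars]

lemma wt_eq_card_nonStars (a : Fin n → Option α) : wt a = (nonStars a).card := rfl

lemma wt_map (f : α → β) (u : Fin n → Option α) :
    wt (fun i => (u i).map f) = wt u := by
  simp [wt]

lemma wt_comp_of_nonStars_subset (u : Fin n → Option α) (f : Fin m ↪ Fin n)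
    (hu : ∀ i, ((u i).isSome : Prop) → i ∈ Set.range f) : wt (u ∘ f) = wt u := by
  rw [wt_eq_card_nonStars, wt_eq_card_nonStars, ← Finset.card_map f]
  congr 1
  ext i
  simp only [Finset.mem_map, mem_nonStars, Function.comp_apply]
  constructor
  · rintro ⟨j, hj, rfl⟩
    exact hj
  · intro hi
    obtain ⟨j, rfl⟩ := hu i hi
    exact ⟨j, hi, rfl⟩

lemma SubFace.isSome {s u : Fin n → Option α} (h : SubFace s u) {i : Fin n}
    (hi : ((u i).isSome : Prop)) : ((s i).isSome : Prop) := by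
  rwa [h i hi]

lemma SubFace.map {s u : Fin n → Option α} (h : SubFace s u) (f : α → β) :
    SubFace (fun i => (s i).map f) (fun i => (u i).map f) := by
  intro i hi
  rw [Option.isSome_map] at hi
  exact congrArg _ (h i hi)

end Words

section Pairing

variable {n m q q' : ℕ}

def fstWord (u : Fin n → Option (Fin (q * q'))) : Fin n → Option (Fin q) :=
  fun i => (u i).map fun x => (finProdFinEquiv.symm x).1

def sndWordOn (a : Fin n → Option (Fin q)) (h : wt a = m) (u : Fin n → Option (Fin (q * q'))) :
    Fin m → Option (Fin q') :=
  fun j => (u ((nonStars a).orderEmbOfFin h j)).map fun x => (finProdFinEquiv.symm x).2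

lemma wt_fstWord (u : Fin n → Option (Fin (q * q'))) : wt (fstWord u) = wt u :=
  wt_map _ u

lemma wt_sndWordOn {a : Fin n → Option (Fin q)} (h : wt a = m)
    {u : Fin n → Option (Fin (q * q'))} (hau : SubFace a (fstWord u)) :
    wt (sndWordOn a h u) = wt u := by
  unfold sndWordOn
  rw [wt_map]
  refine wt_comp_of_nonStars_subset u ((nonStars a).orderEmbOfFin h).toEmbedding fun i hi => ?_
  have hai : i ∈ nonStars a := mem_nonStars.2 (hau.isSome (by simpa [fstWord] using hi))
  exact (Set.ext_iff.1 (Finset.range_orderEmbOfFin _ h) i).2 hai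

lemma fstWord_pairWord (a : Fin n → Option (Fin q)) (b : Fin m → Fin q') (h : wt a = m) :
    fstWord (pairWord a b h) = a := by
  funext i
  unfold fstWord pairWord
  split_ifs with hi
  · simp only [Option.map_some, Equiv.symm_apply_apply, Option.some_get]
  · simp [Option.not_isSome_iff_eq_none.mp hi]

lemma wt_pairWord (a : Fin n → Option (Fin q)) (b : Fin m → Fin q') (h : wt a = m) :
    wt (pairWord a b h) = wt a := by
  rw [← wt_fstWord, fstWord_pairWord]

lemma pairWord_orderEmbOfFin (a : Fin n → Option (Fin q)) (b : Fin m → Fin q') (h : wt a = m)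
    (j : Fin m) :
    pairWord a b h ((nonStars a).orderEmbOfFin h j) =
      (a ((nonStars a).orderEmbOfFin h j)).map fun x => finProdFinEquiv (x, b j) := by
  have hmem := (nonStars a).orderEmbOfFin_mem h j
  have hrank : ((nonStars a).orderIsoOfFin h).symm ⟨_, hmem⟩ = j := by
    rw [OrderIso.symm_apply_eq]
    exact Subtype.ext ((nonStars a).coe_orderIsoOfFin_apply h j).symm
  obtain ⟨x, hx⟩ := Option.isSome_iff_exists.1 (mem_nonStars.1 hmem)
  unfold pairWord
  rw [dif_pos (mem_nonStars.1 hmem)]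
  simp only [hx, Option.get_some, Option.map_some, Option.some.injEq,
    EmbeddingLike.apply_eq_iff_eq, Prod.mk.injEq, true_and]
  exact congrArg b hrank

lemma subFace_pairWord_iff (a : Fin n → Option (Fin q)) (b : Fin m → Fin q') (h : wt a = m)
    (u : Fin n → Option (Fin (q * q'))) :
    SubFace (pairWord a b h) u ↔
      SubFace a (fstWord u) ∧ SubFace (fun j => some (b j)) (sndWordOn a h u) := by
  set e := (nonStars a).orderEmbOfFin h
  constructor
  · intro hsub
    refine ⟨fstWord_pairWord a b h ▸ hsub.map _, fun j hj => ?_⟩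
    have hj' : ((u (e j)).isSome : Prop) := by simpa [sndWordOn] using hj
    obtain ⟨x, hx⟩ :=
      Option.isSome_iff_exists.1 (mem_nonStars.1 ((nonStars a).orderEmbOfFin_mem h j))
    have hpair := hsub (e j) hj'
    rw [pairWord_orderEmbOfFin, hx] at hpair
    change some (b j) = (u (e j)).map _
    rw [← hpair, Option.map_some, Option.map_some, Equiv.symm_apply_apply]
  · rintro ⟨hau, hbu⟩ i hi
    obtain ⟨c, hc⟩ := Option.isSome_iff_exists.1 hi
    have hai : a i = some (finProdFinEquiv.symm c).1 := by
      simpa [fstWord, hc] using hau i (by simp [fstWord, hc])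
    obtain ⟨j, rfl⟩ : i ∈ Set.range e := by
      rw [show Set.range e = nonStars a from Finset.range_orderEmbOfFin _ h]
      exact mem_nonStars.2 (by simp [hai])
    have hbj : b j = (finProdFinEquiv.symm c).2 := by
      simpa [sndWordOn, e, hc] using hbu j (by simp [sndWordOn, e, hc])
    rw [pairWord_orderEmbOfFin, hai, hc, Option.map_some, hbj, Prod.mk.eta,
      Equiv.apply_symm_apply]

end Pairing

theorem construction_I_general (n q q' w t : ℕ)
    (S : Set (Fin n → Option (Fin q))) (hS : IsH n w t (Fin q) S)
    (R : Set (Fin w → Fin q'))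
    (hR : IsH w w t (Fin q') ((fun b => fun i => some (b i)) '' R)) :
    IsH n w t (Fin (q * q'))
      {c | ∃ a ∈ S, ∃ b ∈ R, ∃ h : wt a = w, c = pairWord a b h} := by
  obtain ⟨hS_wt, hS_unique⟩ := hS
  refine ⟨?_, fun u hu => ?_⟩
  · rintro _ ⟨a, -, b, -, h, rfl⟩
    exact (wt_pairWord a b h).trans h
  obtain ⟨a, ⟨haS, hau⟩, ha_unique⟩ := hS_unique (fstWord u) (by rwa [wt_fstWord])
  have haw := hS_wt a haS
  obtain ⟨_, ⟨⟨b, hbR, rfl⟩, hbu⟩, hb_unique⟩ :=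
    hR.2 (sndWordOn a haw u) (by rwa [wt_sndWordOn haw hau])
  refine ⟨pairWord a b haw, ⟨⟨a, haS, b, hbR, haw, rfl⟩,
    (subFace_pairWord_iff a b haw u).2 ⟨hau, hbu⟩⟩, ?_⟩
  rintro _ ⟨⟨a', ha'S, b', hb'R, h', rfl⟩, hsub⟩
  obtain ⟨ha'u, hb'u⟩ := (subFace_pairWord_iff a' b' h' u).1 hsub
  obtain rfl := ha_unique a' ⟨ha'S, ha'u⟩
  obtain rfl : b' = b :=
    Option.some_injective _ |>.comp_left (hb_unique _ ⟨⟨b', hb'R, rfl⟩, hb'u⟩)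
  rfl

theorem construction_I (n q q' w t : ℕ) (hwn : w ≤ n) (htw : t ≤ w) (ht : 1 ≤ t)
    (hq : 1 ≤ q) (hq' : 1 ≤ q')
    (S : Set (Fin n → Option (Fin q))) (hS : IsH n w t (Fin q) S)
    (R : Set (Fin w → Fin q'))
    (hR : IsH w w t (Fin q') ((fun b => fun i => some (b i)) '' R)) :
    IsH n w t (Fin (q * q'))
      {c | ∃ a ∈ S, ∃ b ∈ R, ∃ h : wt a = w, c = pairWord a b h} :=
  construction_I_general n q q' w t S hS R hR
end

section
/- If S is an A(n,q,n−1,n−2) design, then V = (S × (Fin q)^n) ∪ ((Fin q)^n × S), viewed as a set of words of weight 2n−2 in (Fin q ∪ {*})^{2n} by concatenation (full words in (Fin q)^n have weight n), is an A(2n,q,2n−1,2n−2) design. -/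
/-! The two halves of a word of weight `2n - 1` have weights `n - 1` and `n` in some order. The
full half lies in exactly one full word, namely itself, and the other half in exactly one block
of `S`; the opposite product cannot contain the word, since that would make the deficient half
full. -/

section Words

variable {α : Type*}

lemma wt_le {n : ℕ} (u : Fin n → Option α) : wt u ≤ n :=
  (Finset.card_filter_le _ _).trans_eq (Finset.card_fin n)

lemma wt_eq_length_iff {n : ℕ} {u : Fin n → Option α} : wt u = n ↔ ∀ i, (u i).isSome := by
  simpa [wt] using
    Finset.card_filter_eq_iff (s := Finset.univ) (p := fun i => ((u i).isSome : Prop))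

lemma wt_append {m n : ℕ} (u : Fin m → Option α) (v : Fin n → Option α) :
    wt (Fin.append u v) = wt u + wt v := by
  simp only [wt, Finset.card_filter, Fin.sum_univ_add, Fin.append_left, Fin.append_right]

lemma subFace_append_iff {m n : ℕ} {v₁ u₁ : Fin m → Option α} {v₂ u₂ : Fin n → Option α} :
    SubFace (Fin.append v₁ v₂) (Fin.append u₁ u₂) ↔ SubFace v₁ u₁ ∧ SubFace v₂ u₂ := by
  simp only [SubFace, Fin.forall_fin_add, Fin.append_left, Fin.append_right]

def fullWords (n : ℕ) (α : Type*) : Set (Fin n → Option α) :=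
  Set.range fun (d : Fin n → α) i => some (d i)

lemma mem_fullWords_iff {n : ℕ} {f : Fin n → Option α} :
    f ∈ fullWords n α ↔ ∀ i, (f i).isSome := by
  refine ⟨?_, fun h => ⟨fun i => (f i).get (h i), funext fun i => Option.some_get _⟩⟩
  rintro ⟨d, rfl⟩ i
  rfl

lemma SubFace.eq_of_mem_fullWords {n : ℕ} {v f : Fin n → Option α} (h : SubFace v f)
    (hf : f ∈ fullWords n α) : v = f :=
  funext fun i => h i (mem_fullWords_iff.1 hf i)

lemma isA_fullWords (n : ℕ) (α : Type*) : IsA n n n α (fullWords n α) := by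
  refine ⟨fun f hf => wt_eq_length_iff.2 (mem_fullWords_iff.1 hf), fun v hv => ?_⟩
  refine ⟨v, ⟨mem_fullWords_iff.2 (wt_eq_length_iff.1 hv), fun _ _ => rfl⟩, ?_⟩
  rintro f ⟨hf, hvf⟩
  exact (hvf.eq_of_mem_fullWords hf).symm

end Words

lemma existsUnique_union_of_forall_not {β : Type*} {p : β → Prop} {A B : Set β}
    (hA : ∃! x, x ∈ A ∧ p x) (hB : ∀ x ∈ B, ¬ p x) : ∃! x, x ∈ A ∪ B ∧ p x := by
  obtain ⟨x, ⟨hxA, hx⟩, huniq⟩ := hA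
  refine ⟨x, ⟨Or.inl hxA, hx⟩, ?_⟩
  rintro y ⟨hyA | hyB, hy⟩
  · exact huniq y ⟨hyA, hy⟩
  · exact absurd hy (hB y hyB)

section Designs

variable {α : Type*} {m n : ℕ}

lemma existsUnique_mem_image2_append {S : Set (Fin m → Option α)} {T : Set (Fin n → Option α)}
    {v₁ : Fin m → Option α} {v₂ : Fin n → Option α}
    (h₁ : ∃! a, a ∈ S ∧ SubFace v₁ a) (h₂ : ∃! b, b ∈ T ∧ SubFace v₂ b) :
    ∃! s, s ∈ Set.image2 Fin.append S T ∧ SubFace (Fin.append v₁ v₂) s := by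
  obtain ⟨a, ⟨ha, hva⟩, ha_uniq⟩ := h₁
  obtain ⟨b, ⟨hb, hvb⟩, hb_uniq⟩ := h₂
  refine ⟨Fin.append a b, ⟨Set.mem_image2_of_mem ha hb, subFace_append_iff.2 ⟨hva, hvb⟩⟩, ?_⟩
  rintro _ ⟨⟨a', ha', b', hb', rfl⟩, hsub⟩
  obtain ⟨hva', hvb'⟩ := subFace_append_iff.1 hsub
  rw [ha_uniq a' ⟨ha', hva'⟩, hb_uniq b' ⟨hb', hvb'⟩]

theorem IsA.union_image2_append_fullWords {t : ℕ} {S : Set (Fin n → Option α)} (hn : n ≠ 0)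
    (hS : IsA n (n - 1) t α S) :
    IsA (n + n) (n + n - 1) (t + n) α
      (Set.image2 Fin.append S (fullWords n α) ∪ Set.image2 Fin.append (fullWords n α) S) := by
  have hF := isA_fullWords n α
  refine ⟨?_, fun v hv => ?_⟩
  · rintro _ (⟨a, ha, f, hf, rfl⟩ | ⟨f, hf, a, ha, rfl⟩) <;>
      rw [wt_append, hS.1 a ha, hF.1 f hf]
    exact add_comm n t
  obtain ⟨v₁, v₂, rfl⟩ : ∃ v₁ v₂, v = Fin.append v₁ v₂ := ⟨_, _, Fin.append_castAdd_natAdd.symm⟩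
  rw [wt_append] at hv
  have := wt_le v₁
  have := wt_le v₂
  rcases (by omega : wt v₁ = n - 1 ∧ wt v₂ = n ∨ wt v₁ = n ∧ wt v₂ = n - 1) with
    ⟨h₁, h₂⟩ | ⟨h₁, h₂⟩
  · refine existsUnique_union_of_forall_not
      (existsUnique_mem_image2_append (hS.2 v₁ h₁) (hF.2 v₂ h₂)) ?_
    rintro _ ⟨f, hf, a, -, rfl⟩ hsub
    have := (subFace_append_iff.1 hsub).1.eq_of_mem_fullWords hf ▸ hF.1 f hf
    omega
  · rw [Set.union_comm]
    refine existsUnique_union_of_forall_not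
      (existsUnique_mem_image2_append (hF.2 v₁ h₁) (hS.2 v₂ h₂)) ?_
    rintro _ ⟨a, -, f, hf, rfl⟩ hsub
    have := (subFace_append_iff.1 hsub).2.eq_of_mem_fullWords hf ▸ hF.1 f hf
    omega

end Designs

theorem construction_III_general (n q : ℕ) (hn : 2 ≤ n)
    (S : Set (Fin n → Option (Fin q))) (hS : IsA n (n - 1) (n - 2) (Fin q) S) :
    IsA (n + n) (2 * n - 1) (2 * n - 2) (Fin q)
      {v | (∃ a ∈ S, ∃ d : Fin n → Fin q, v = Fin.append a fun i => some (d i)) ∨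
           (∃ a ∈ S, ∃ d : Fin n → Fin q, v = Fin.append (fun i => some (d i)) a)} := by
  have h := hS.union_image2_append_fullWords (by omega)
  rw [show n + n - 1 = 2 * n - 1 by omega, show n - 2 + n = 2 * n - 2 by omega] at h
  convert h using 1
  ext v
  constructor
  · rintro (⟨a, ha, d, rfl⟩ | ⟨a, ha, d, rfl⟩)
    · exact Or.inl (Set.mem_image2_of_mem ha ⟨d, rfl⟩)
    · exact Or.inr (Set.mem_image2_of_mem ⟨d, rfl⟩ ha)
  · rintro (⟨a, ha, _, ⟨d, rfl⟩, rfl⟩ | ⟨_, ⟨d, rfl⟩, a, ha, rfl⟩)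
    · exact Or.inl ⟨a, ha, d, rfl⟩
    · exact Or.inr ⟨a, ha, d, rfl⟩

theorem construction_III (n q : ℕ) (hn : 2 ≤ n) (hq : 1 ≤ q)
    (S : Set (Fin n → Option (Fin q))) (hS : IsA n (n - 1) (n - 2) (Fin q) S) :
    IsA (n + n) (2 * n - 1) (2 * n - 2) (Fin q)
      {v | (∃ a ∈ S, ∃ d : Fin n → Fin q, v = Fin.append a fun i => some (d i)) ∨
           (∃ a ∈ S, ∃ d : Fin n → Fin q, v = Fin.append (fun i => some (d i)) a)} :=
  construction_III_general n q hn S hS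
end

section
/- If an H(n,q,w,t) design exists with t ≥ 1, then an H(n−1,q,w−1,t−1) design exists (the derived design obtained by restricting to the codewords having a fixed value a in a fixed coordinate and deleting that coordinate). -/
/-! Extending a weight-`(t-1)` word `u` of length `m` by a fixed symbol `a` gives a weight-`t` word,
which contains exactly one codeword of the design; that codeword must end in `a`, so deleting its
last coordinate gives the unique codeword of the derived design contained in `u`. -/

section Derived

variable {m : ℕ} {α : Type*}

lemma wt_snoc_some (u : Fin m → Option α) (a : α) :
    wt (Fin.snoc u (some a) : Fin (m + 1) → _) = wt u + 1 := by
  simp only [wt, Finset.card_filter, Fin.sum_univ_castSucc, Fin.snoc_castSucc, Fin.snoc_last,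
    Option.isSome_some, if_true]

lemma subFace_snoc_snoc_some_iff {s u : Fin m → Option α} {x : Option α} {a : α} :
    SubFace (Fin.snoc s x : Fin (m + 1) → _) (Fin.snoc u (some a)) ↔
      x = some a ∧ SubFace s u := by
  simp [SubFace, Fin.forall_fin_succ', and_comm]

def derivedDesign (S : Set (Fin (m + 1) → Option α)) (a : α) : Set (Fin m → Option α) :=
  {s | Fin.snoc s (some a) ∈ S}

theorem IsH.derivedDesign {w t : ℕ} {S : Set (Fin (m + 1) → Option α)} (hS : IsH (m + 1) w t α S)
    (ht : 1 ≤ t) (a : α) : IsH m (w - 1) (t - 1) α (derivedDesign S a) := by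
  refine ⟨fun s hs => ?_, fun u hu => ?_⟩
  · have := hS.1 _ hs
    rw [wt_snoc_some] at this
    omega
  obtain ⟨s, ⟨hsS, hsu⟩, huniq⟩ := hS.2 (Fin.snoc u (some a)) (by rw [wt_snoc_some]; omega)
  rw [← Fin.snoc_init_self s] at hsS hsu
  obtain ⟨hlast, hsu⟩ := subFace_snoc_snoc_some_iff.1 hsu
  refine ⟨Fin.init s, ⟨by rwa [hlast] at hsS, hsu⟩, fun s' ⟨hs'S, hs'u⟩ => ?_⟩
  rw [← huniq _ ⟨hs'S, subFace_snoc_snoc_some_iff.2 ⟨rfl, hs'u⟩⟩, Fin.init_snoc]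

end Derived

theorem derived_H_design (n q w t : ℕ) (hwn : w ≤ n) (htw : t ≤ w) (ht : 1 ≤ t) (hq : 1 ≤ q)
    (S : Set (Fin n → Option (Fin q))) (hS : IsH n w t (Fin q) S) :
    ∃ S' : Set (Fin (n - 1) → Option (Fin q)), IsH (n - 1) (w - 1) (t - 1) (Fin q) S' := by
  obtain ⟨m, rfl⟩ : ∃ m, n = m + 1 := ⟨n - 1, by omega⟩
  exact ⟨_, hS.derivedDesign ht ⟨0, hq⟩⟩
end

section
/- The minimum Hamming distance between two distinct codewords of an H(n,q,w,t) design with more than one codeword is at most 1 + 2(w−t), i.e., there exist two distinct codewords at Hamming distance ≤ 1 + 2(w−t), provided q ≥ 2 and n > w. -/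
open Finset

section Words

variable {n : ℕ} {α : Type*}

def supp (u : Fin n → Option α) : Finset (Fin n) :=
  univ.filter fun i => ((u i).isSome : Prop)

theorem mem_supp {u : Fin n → Option α} {i : Fin n} : i ∈ supp u ↔ (u i).isSome := by
  simp [supp]

theorem wt_eq_card_supp (u : Fin n → Option α) : wt u = #(supp u) := rfl

theorem supp_update_some {u : Fin n → Option α} {i : Fin n} (hi : i ∈ supp u) (a : α) :
    supp (Function.update u i (some a)) = supp u := by
  ext k
  rcases eq_or_ne k i with rfl | hk
  · simpa [mem_supp] using hi
  · simp [mem_supp, Function.update_of_ne hk]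

def restrictTo (u : Fin n → Option α) (T : Finset (Fin n)) : Fin n → Option α :=
  T.piecewise u fun _ => none

theorem supp_restrictTo {u : Fin n → Option α} {T : Finset (Fin n)} (hT : T ⊆ supp u) :
    supp (restrictTo u T) = T := by
  ext k
  by_cases hk : k ∈ T
  · simpa [restrictTo, mem_supp, hk] using hT hk
  · simp [restrictTo, mem_supp, hk]

theorem subFace_restrictTo_iff {u v : Fin n → Option α} {T : Finset (Fin n)}
    (hT : T ⊆ supp u) :
    SubFace v (restrictTo u T) ↔ ∀ k ∈ T, v k = u k := by
  simp only [SubFace, ← mem_supp, supp_restrictTo hT]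
  exact forall₂_congr fun k hk => by rw [restrictTo, piecewise_eq_of_mem _ _ _ hk]

variable [DecidableEq α]

theorem hammingDist_le_card_sdiff {x y : Fin n → Option α} {E : Finset (Fin n)}
    (hE : ∀ k ∈ E, x k = y k) : hammingDist x y ≤ #((supp x ∪ supp y) \ E) := by
  refine card_le_card fun k hk => ?_
  simp only [mem_filter, mem_univ, true_and] at hk
  simp only [mem_sdiff, mem_union, mem_supp]
  refine ⟨?_, fun hkE => hk (hE k hkE)⟩
  by_contra! h
  cases hx : x k <;> cases hy : y k <;> simp_all

theorem hammingDist_add_card_add_card_le {x y : Fin n → Option α} {E T : Finset (Fin n)}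
    (hET : E ⊆ T) (hT : T ⊆ supp x ∩ supp y) (hE : ∀ k ∈ E, x k = y k) :
    hammingDist x y + #E + #T ≤ wt x + wt y := by
  have hdist := hammingDist_le_card_sdiff hE
  have hEu : E ⊆ supp x ∪ supp y := (hET.trans hT).trans inter_subset_union
  rw [card_sdiff_of_subset hEu] at hdist
  have hunion := card_union_add_card_inter (supp x) (supp y)
  have hinter := card_le_card hT
  have hEcard := card_le_card hEu
  rw [wt_eq_card_supp, wt_eq_card_supp]
  omega

end Words

theorem IsH.exists_mem_ne_eqOn_erase {n w t : ℕ} {α : Type*} [Nontrivial α]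
    {S : Set (Fin n → Option α)} (hS : IsH n w t α S) {s : Fin n → Option α}
    {T : Finset (Fin n)} (hT : T ⊆ supp s) (hTt : #T = t) {i : Fin n} (hi : i ∈ T) :
    ∃ s' ∈ S, s' ≠ s ∧ T ⊆ supp s' ∧ ∀ k ∈ T.erase i, s' k = s k := by
  obtain ⟨b, hb⟩ := Option.isSome_iff_exists.1 (mem_supp.1 (hT hi))
  obtain ⟨a, hab⟩ := exists_ne b
  set x := Function.update s i (some a)
  have hTx : T ⊆ supp x := by rwa [supp_update_some (hT hi)]
  have hwt : wt (restrictTo x T) = t := by rw [wt_eq_card_supp, supp_restrictTo hTx, hTt]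
  obtain ⟨s', ⟨hs', hface⟩, -⟩ := hS.2 _ hwt
  have hs'x : ∀ k ∈ T, s' k = x k := (subFace_restrictTo_iff hTx).1 hface
  refine ⟨s', hs', fun h => hab ?_, fun k hk => ?_, fun k hk => ?_⟩
  · simpa [x, h, hb, eq_comm] using hs'x i hi
  · rw [mem_supp, hs'x k hk]
    exact mem_supp.1 (hTx hk)
  · exact (hs'x k (mem_of_mem_erase hk)).trans (Function.update_of_ne (ne_of_mem_erase hk) _ _)

theorem H_design_dist_upper_general (n q w t : ℕ) (htw : t ≤ w) (ht : 1 ≤ t) (hq : 2 ≤ q)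
    (S : Set (Fin n → Option (Fin q))) (hS : IsH n w t (Fin q) S) (hS2 : S.Nontrivial) :
    ∃ u ∈ S, ∃ v ∈ S, u ≠ v ∧ hammingDist u v ≤ 1 + 2 * (w - t) := by
  have : Nontrivial (Fin q) := Fin.nontrivial_iff_two_le.2 hq
  obtain ⟨s, hs⟩ := hS2.nonempty
  obtain ⟨T, hTs, hTt⟩ := exists_subset_card_eq (s := supp s) (htw.trans (hS.1 s hs).ge)
  obtain ⟨i, hi⟩ := card_pos.1 (by omega : 0 < #T)
  obtain ⟨s', hs', hne, hTs', hagree⟩ := hS.exists_mem_ne_eqOn_erase hTs hTt hi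
  refine ⟨s, hs, s', hs', hne.symm, ?_⟩
  have hbound := hammingDist_add_card_add_card_le (erase_subset i T) (subset_inter hTs hTs')
    fun k hk => (hagree k hk).symm
  rw [card_erase_of_mem hi, hS.1 s hs, hS.1 s' hs'] at hbound
  omega

theorem H_design_dist_upper (n q w t : ℕ) (hwn : w < n) (htw : t ≤ w) (ht : 1 ≤ t) (hq : 2 ≤ q)
    (S : Set (Fin n → Option (Fin q))) (hS : IsH n w t (Fin q) S) (hS2 : S.Nontrivial) :
    ∃ u ∈ S, ∃ v ∈ S, u ≠ v ∧ hammingDist u v ≤ 1 + 2 * (w - t) :=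
  H_design_dist_upper_general n q w t htw ht hq S hS hS2
end

section
/- For q = 1, a set S is an A(n,1,w,t) design if and only if the family of complements of the supports of codewords of S forms a Steiner system S(n−w, n−t, n). -/
/-- Steiner system `S(t,w,n)`: a family of `w`-subsets of `Fin n` such that every `t`-subset
is contained in exactly one block. -/
def IsSteiner (t w n : ℕ) (B : Set (Finset (Fin n))) : Prop :=
  (∀ b ∈ B, b.card = w) ∧ ∀ T : Finset (Fin n), T.card = t → ∃! b, b ∈ B ∧ T ⊆ b


/-!
Over a one-letter alphabet a word is determined by its support, and `u` contains `v` exactly when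
`supp u ⊆ supp v`. Complementing supports is a bijection onto `Finset (Fin n)` that reverses
inclusion and turns weights `w, t` into block sizes `n - w, n - t`,
so the defining property of an `A(n,1,w,t)` design is that of a Steiner system.
-/

theorem Function.Injective.existsUnique_mem_image_iff {X Y : Type*} {f : X → Y}
    (hf : Function.Injective f) {S : Set X} {P : Y → Prop} :
    (∃! y, y ∈ f '' S ∧ P y) ↔ ∃! x, x ∈ S ∧ P (f x) := by
  constructor
  · rintro ⟨_, ⟨⟨x, hx, rfl⟩, hP⟩, huniq⟩
    exact ⟨x, ⟨hx, hP⟩, fun x' hx' => hf (huniq _ ⟨⟨x', hx'.1, rfl⟩, hx'.2⟩)⟩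
  · rintro ⟨x, ⟨hx, hP⟩, huniq⟩
    refine ⟨f x, ⟨⟨x, hx, rfl⟩, hP⟩, ?_⟩
    rintro _ ⟨⟨x', hx', rfl⟩, hP'⟩
    rw [huniq x' ⟨hx', hP'⟩]

theorem SubFace.antisymm {n : ℕ} {α : Type*} {u v : Fin n → Option α}
    (huv : SubFace u v) (hvu : SubFace v u) : u = v := by
  funext i
  cases hu : u i with
  | some a => exact ((hvu i (by simp [hu])).trans hu).symm
  | none =>
    cases hv : v i with
    | none => rfl
    | some b => exact hu.symm.trans (huv i (by simp [hv])) |>.trans hv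

namespace Word

variable {n : ℕ} {α : Type*}

def support (u : Fin n → Option α) : Finset (Fin n) :=
  Finset.univ.filter fun i => ((u i).isSome : Prop)

theorem mem_support {u : Fin n → Option α} {i : Fin n} : i ∈ support u ↔ (u i).isSome := by
  simp [support]

theorem card_compl_support (u : Fin n → Option α) : (support u)ᶜ.card = n - wt u := by
  rw [Finset.card_compl, Fintype.card_fin]
  rfl

theorem wt_le (u : Fin n → Option α) : wt u ≤ n :=
  (Finset.card_filter_le _ _).trans (Finset.card_fin n).le

theorem subFace_iff_support_subset [Subsingleton α] {v u : Fin n → Option α} :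
    SubFace v u ↔ support u ⊆ support v := by
  simp only [SubFace, Finset.subset_iff, mem_support]
  refine forall_congr' fun i => imp_congr_right fun hu => ⟨fun h => h ▸ hu, fun hv => ?_⟩
  obtain ⟨a, ha⟩ := Option.isSome_iff_exists.1 hv
  obtain ⟨b, hb⟩ := Option.isSome_iff_exists.1 hu
  rw [ha, hb, Subsingleton.elim a b]

theorem support_injective [Subsingleton α] :
    Function.Injective (support : (Fin n → Option α) → Finset (Fin n)) := fun _ _ h =>
  SubFace.antisymm (subFace_iff_support_subset.2 h.ge) (subFace_iff_support_subset.2 h.le)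

theorem support_surjective [Inhabited α] :
    Function.Surjective (support : (Fin n → Option α) → Finset (Fin n)) := fun A =>
  ⟨fun i => if i ∈ A then some default else none, by ext i; simp [mem_support, apply_ite]⟩

theorem bijective_compl_support [Unique α] :
    Function.Bijective fun u : Fin n → Option α => (support u)ᶜ :=
  compl_involutive.bijective.comp ⟨support_injective, support_surjective⟩

theorem isA_iff_isSteiner_compl_support [Unique α] {w t : ℕ} (hwn : w ≤ n) (htn : t ≤ n)
    (S : Set (Fin n → Option α)) :
    IsA n w t α S ↔ IsSteiner (n - w) (n - t) n ((fun s => (support s)ᶜ) '' S) := by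
  have card_iff {k : ℕ} (hk : k ≤ n) (u : Fin n → Option α) :
      (support u)ᶜ.card = n - k ↔ wt u = k := by
    have := wt_le u
    rw [card_compl_support]
    omega
  have hbij := bijective_compl_support (n := n) (α := α)
  refine and_congr ?_ ?_
  · rw [Set.forall_mem_image]
    exact forall₂_congr fun s _ => (card_iff htn s).symm
  · rw [hbij.surjective.forall]
    refine forall_congr' fun v => imp_congr (card_iff hwn v).symm ?_
    rw [hbij.injective.existsUnique_mem_image_iff]
    simp only [Finset.compl_subset_compl, ← subFace_iff_support_subset]

end Word

theorem A_design_q1_iff_Steiner_general (n w t : ℕ) (hwn : w ≤ n) (htw : t ≤ w)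
    (S : Set (Fin n → Option (Fin 1))) :
    IsA n w t (Fin 1) S ↔
      IsSteiner (n - w) (n - t) n
        ((fun s : Fin n → Option (Fin 1) =>
            (Finset.univ.filter fun i => ((s i).isSome : Prop))ᶜ) '' S) :=
  Word.isA_iff_isSteiner_compl_support hwn (htw.trans hwn) S

theorem A_design_q1_iff_Steiner (n w t : ℕ) (hwn : w ≤ n) (htw : t ≤ w) (ht : 1 ≤ t)
    (S : Set (Fin n → Option (Fin 1))) :
    IsA n w t (Fin 1) S ↔
      IsSteiner (n - w) (n - t) n
        ((fun s : Fin n → Option (Fin 1) =>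
            (Finset.univ.filter fun i => ((s i).isSome : Prop))ᶜ) '' S) :=
  A_design_q1_iff_Steiner_general n w t hwn htw S
end

section
/- The number of H(m,3,m,m−1) designs, i.e., the number of MDS codes with distance 2 in (Fin 3)^m, equals 3 · 2^{m−1}. -/
/-!
A design is determined by its set `C ⊆ (ZMod 3)^m` of words without stars, and the design
condition says exactly that every line of the hypercube meets `C` once. Every hyperplane
`x₀ + ∑ ηᵢ xᵢ₊₁ = c` with unit coefficients `ηᵢ` has this property, and there are no other
such sets: slicing `C` along the last coordinate, the three slices are such hyperplanes by
induction, they are pairwise disjoint and hence parallel, and their constants form a permutation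
of `ZMod 3`, which is necessarily affine. Counting the pairs `(η, c)` gives `2^(m-1) · 3`.
-/

lemma Function.Injective.existsUnique_mem_image_iff_s14 {β γ : Type*} {f : β → γ}
    (hf : Function.Injective f) {s : Set β} {p : γ → Prop} :
    (∃! c, c ∈ f '' s ∧ p c) ↔ ∃! b, b ∈ s ∧ p (f b) := by
  constructor
  · rintro ⟨_, ⟨⟨b, hb, rfl⟩, hp⟩, huniq⟩
    exact ⟨b, ⟨hb, hp⟩, fun b' hb' => hf (huniq _ ⟨⟨b', hb'.1, rfl⟩, hb'.2⟩)⟩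
  · rintro ⟨b, ⟨hb, hp⟩, huniq⟩
    refine ⟨f b, ⟨⟨b, hb, rfl⟩, hp⟩, ?_⟩
    rintro _ ⟨⟨b', hb', rfl⟩, hp'⟩
    rw [huniq b' ⟨hb', hp'⟩]

namespace Hypercube

open Function

def IsMDS {ι α : Type*} [DecidableEq ι] (C : Set (ι → α)) : Prop :=
  ∀ (j : ι) (y : ι → α), ∃! a, update y j a ∈ C

section Words

variable {n : ℕ} {α : Type*}

def embed (x : Fin n → α) : Fin n → Option α := fun i => some (x i)

lemma embed_injective : Injective (embed : (Fin n → α) → Fin n → Option α) :=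
  fun _ _ h => funext fun i => Option.some_injective _ (congrFun h i)

lemma wt_eq_iff_forall_isSome (u : Fin n → Option α) : wt u = n ↔ ∀ i, (u i).isSome := by
  have h := (Finset.univ.filter fun i => ((u i).isSome : Prop)).card_eq_iff_eq_univ
  rw [Fintype.card_fin, Finset.filter_eq_self] at h
  simpa [wt] using h

lemma wt_embed (x : Fin n → α) : wt (embed x) = n :=
  (wt_eq_iff_forall_isSome _).2 fun _ => rfl

lemma exists_embed_eq_of_wt_eq {u : Fin n → Option α} (hu : wt u = n) : ∃ x, embed x = u :=
  ⟨fun i => (u i).get ((wt_eq_iff_forall_isSome u).1 hu i), funext fun _ => Option.some_get _⟩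

lemma wt_update_embed_none (y : Fin n → α) (j : Fin n) :
    wt (update (embed y) j none) = n - 1 := by
  have : Finset.univ.filter (fun i => ((update (embed y) j none i).isSome : Prop))
      = Finset.univ.erase j := by
    ext i; by_cases hij : i = j <;> simp [hij, embed]
  rw [wt, this, Finset.card_erase_of_mem (Finset.mem_univ j), Finset.card_univ, Fintype.card_fin]

lemma exists_update_embed_none_eq_of_wt_eq [Inhabited α] {u : Fin n → Option α} (hn : 1 ≤ n)
    (hu : wt u = n - 1) : ∃ y j, update (embed y) j none = u := by
  have : (Finset.univ.filter fun i => ((u i).isSome : Prop))ᶜ.card = 1 := by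
    rw [Finset.card_compl, Fintype.card_fin, ← wt, hu]; omega
  obtain ⟨j, hj⟩ := Finset.card_eq_one.1 this
  have hnone : ∀ i, (u i).isSome = false ↔ i = j := by simpa [Finset.ext_iff] using hj
  refine ⟨fun i => (u i).getD default, j, funext fun i => ?_⟩
  by_cases hij : i = j
  · subst hij
    have hi : u i = none := by simpa using (hnone i).2 rfl
    simp [hi]
  · obtain ⟨a, ha⟩ := Option.ne_none_iff_exists'.1 (by simpa using mt (hnone i).1 hij)
    simp [hij, embed, ha]

lemma subFace_update_embed_none_iff {x y : Fin n → α} {j : Fin n} :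
    SubFace (embed x) (update (embed y) j none) ↔ ∃ a, update y j a = x := by
  simp only [SubFace, update_eq_iff, exists_eq_left]
  refine forall_congr' fun i => ?_
  by_cases hij : i = j
  · simp [hij]
  · simp [hij, embed, eq_comm]

lemma existsUnique_subFace_update_embed_none_iff (C : Set (Fin n → α)) (y : Fin n → α)
    (j : Fin n) :
    (∃! s, s ∈ embed '' C ∧ SubFace s (update (embed y) j none)) ↔ ∃! a, update y j a ∈ C := by
  rw [embed_injective.existsUnique_mem_image_iff_s14]
  simpa [subFace_update_embed_none_iff, and_comm] using
    (update_injective y j).existsUnique_mem_image_iff_s14 (s := Set.univ) (p := (· ∈ C))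

theorem isH_iff [Inhabited α] (hn : 1 ≤ n) (S : Set (Fin n → Option α)) :
    IsH n n (n - 1) α S ↔ ∃ C : Set (Fin n → α), IsMDS C ∧ embed '' C = S := by
  constructor
  · rintro ⟨hwt, hline⟩
    have hS : embed '' (embed ⁻¹' S) = S :=
      Set.image_preimage_eq_of_subset fun s hs => exists_embed_eq_of_wt_eq (hwt s hs)
    refine ⟨embed ⁻¹' S, fun j y => ?_, hS⟩
    rw [← existsUnique_subFace_update_embed_none_iff, hS]
    exact hline _ (wt_update_embed_none y j)
  · rintro ⟨C, hC, rfl⟩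
    refine ⟨Set.forall_mem_image.2 fun x _ => wt_embed x, fun u hu => ?_⟩
    obtain ⟨y, j, rfl⟩ := exists_update_embed_none_eq_of_wt_eq hn hu
    exact (existsUnique_subFace_update_embed_none_iff C y j).2 (hC j y)

theorem ncard_setOf_isH_eq_ncard_setOf_isMDS [Inhabited α] (hn : 1 ≤ n) :
    {S | IsH n n (n - 1) α S}.ncard = {C : Set (Fin n → α) | IsMDS C}.ncard := by
  have : {S | IsH n n (n - 1) α S} = Set.image embed '' {C | IsMDS C} := by
    ext S
    simp [isH_iff hn]
  rw [this, Set.ncard_image_of_injective _ (Set.image_injective.2 embed_injective)]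

end Words

section Slices

variable {n : ℕ} {α : Type*} {C : Set (Fin (n + 1) → α)}

lemma IsMDS.snoc_slice (hC : IsMDS C) (t : α) : IsMDS {y | Fin.snoc y t ∈ C} := by
  intro j y
  simpa only [Set.mem_ofPred_eq, Fin.snoc_update] using hC j.castSucc (Fin.snoc y t)

lemma IsMDS.disjoint_snoc_slice (hC : IsMDS C) {t t' : α} (h : t ≠ t') :
    Disjoint {y | Fin.snoc y t ∈ C} {y | Fin.snoc y t' ∈ C} := by
  refine Set.disjoint_left.2 fun y ht ht' => h ?_
  obtain ⟨a, -, huniq⟩ := hC (Fin.last n) (Fin.snoc y t)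
  simp only [Fin.update_snoc_last] at huniq
  exact (huniq t ht).trans (huniq t' ht').symm

end Slices

section Hyperplane

variable {ι R : Type*} [Fintype ι] [CommRing R]

def hyperplane (ε : ι → Rˣ) (c : R) : Set (ι → R) := {x | ∑ i, (ε i : R) * x i = c}

lemma sum_mul_update [DecidableEq ι] (a x : ι → R) (j : ι) (t : R) :
    ∑ i, a i * update x j t i = ∑ i, a i * x i + a j * (t - x j) := by
  have h (i : ι) :
      a i * update x j t i = a i * x i + (Pi.single j (a j * (t - x j)) : ι → R) i := by
    rcases eq_or_ne i j with rfl | hij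
    · simp only [update_self, Pi.single_eq_same]; ring
    · simp [hij]
  simp [h, Finset.sum_add_distrib]

lemma isMDS_hyperplane [DecidableEq ι] (ε : ι → Rˣ) (c : R) : IsMDS (hyperplane ε c) := by
  intro j y
  simp only [hyperplane, Set.mem_ofPred_eq, sum_mul_update]
  refine ⟨y j + ↑(ε j)⁻¹ * (c - ∑ i, ε i * y i), ?_, fun a ha => ?_⟩
  · linear_combination (c - ∑ i, ε i * y i) * (ε j).mul_inv
  · linear_combination ↑(ε j)⁻¹ * ha - (a - y j) * (ε j).inv_mul

variable {n : ℕ}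

lemma mem_hyperplane_cons_one_iff (η : Fin n → Rˣ) (c : R) (x : Fin (n + 1) → R) :
    x ∈ hyperplane (Fin.cons 1 η) c ↔ x 0 + ∑ i, (η i : R) * x i.succ = c := by
  simp [hyperplane, Fin.sum_univ_succ]

lemma snoc_mem_hyperplane_snoc_iff (ε : Fin n → Rˣ) (e : Rˣ) (y : Fin n → R) (t c : R) :
    Fin.snoc y t ∈ hyperplane (Fin.snoc ε e) c ↔ y ∈ hyperplane ε (c - e * t) := by
  simp [hyperplane, Fin.sum_univ_castSucc, eq_sub_iff_add_eq]

lemma hyperplane_cons_one_injective :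
    Injective fun p : (Fin n → Rˣ) × R => hyperplane (Fin.cons 1 p.1) p.2 := by
  rintro ⟨η, c⟩ ⟨η', c'⟩ h
  simp only at h
  have hmem (x : Fin (n + 1) → R) :
      x 0 + ∑ i, (η i : R) * x i.succ = c ↔ x 0 + ∑ i, (η' i : R) * x i.succ = c' := by
    rw [← mem_hyperplane_cons_one_iff, ← mem_hyperplane_cons_one_iff, h]
  obtain rfl : c = c' := by simpa using hmem (Fin.cons c 0)
  refine Prod.ext (funext fun j => Units.ext ?_) rfl
  have hj := hmem (Fin.cons (c - η j) (Pi.single j 1))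
  simp only [Fin.cons_zero, Fin.cons_succ, Pi.single_apply, mul_ite, mul_one, mul_zero,
    Finset.sum_ite_eq', Finset.mem_univ, if_true, sub_add_cancel, true_iff] at hj
  linear_combination -hj

lemma eq_of_disjoint_hyperplane_cons_one {K : Type*} [Field K] {η η' : Fin n → Kˣ} {c c' : K}
    (h : Disjoint (hyperplane (Fin.cons 1 η) c) (hyperplane (Fin.cons 1 η') c')) :
    η = η' ∧ c ≠ c' := by
  obtain rfl : η = η' := by
    funext j
    by_contra hne
    have hd : (η j : K) - η' j ≠ 0 := sub_ne_zero.2 (Units.val_injective.ne hne)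
    obtain ⟨b, hb⟩ : ∃ b, b = (c - c') / (η j - η' j) := ⟨_, rfl⟩
    have hx : Fin.cons (c - η j * b) (Pi.single j b) ∈ hyperplane (Fin.cons 1 η) c := by
      simp [mem_hyperplane_cons_one_iff, Pi.single_apply]
    have hx' : Fin.cons (c - η j * b) (Pi.single j b) ∈ hyperplane (Fin.cons 1 η') c' := by
      simp only [mem_hyperplane_cons_one_iff, Fin.cons_zero, Fin.cons_succ, Pi.single_apply,
        mul_ite, mul_zero, Finset.sum_ite_eq', Finset.mem_univ, if_true, hb]
      field_simp
      ring
    exact Set.disjoint_left.1 h hx hx'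
  refine ⟨rfl, ?_⟩
  rintro rfl
  have hmem : Fin.cons c 0 ∈ hyperplane (Fin.cons 1 η) c := by simp [mem_hyperplane_cons_one_iff]
  exact Set.disjoint_left.1 h hmem hmem

end Hyperplane

lemma exists_affine_of_injective_zmod_three :
    ∀ f : ZMod 3 → ZMod 3, Injective f → ∃ (δ : (ZMod 3)ˣ) (d : ZMod 3), ∀ t, f t = δ * t + d :=
  by decide

theorem IsMDS.exists_eq_hyperplane_cons_one {n : ℕ} {C : Set (Fin (n + 1) → ZMod 3)}
    (hC : IsMDS C) : ∃ η c, C = hyperplane (Fin.cons 1 η) c := by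
  induction n with
  | zero =>
    obtain ⟨a, ha, huniq⟩ := hC 0 (0 : Fin 1 → ZMod 3)
    refine ⟨Fin.elim0, a, Set.ext fun x => ?_⟩
    have hx : update (0 : Fin 1 → ZMod 3) 0 (x 0) = x :=
      funext fun i => by rw [Fin.fin_one_eq_zero i, update_self]
    rw [mem_hyperplane_cons_one_iff, Finset.univ_eq_empty, Finset.sum_empty, add_zero]
    exact ⟨fun hxC => huniq _ (hx ▸ hxC), fun hxa => hx ▸ hxa ▸ ha⟩
  | succ n ih =>
    choose η c hslice using fun t => ih (hC.snoc_slice t)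
    have hdisj (t t' : ZMod 3) (h : t ≠ t') : η t = η t' ∧ c t ≠ c t' :=
      eq_of_disjoint_hyperplane_cons_one (hslice t ▸ hslice t' ▸ hC.disjoint_snoc_slice h)
    have hη (t : ZMod 3) : η t = η 0 := by
      rcases eq_or_ne t 0 with rfl | ht
      · rfl
      · exact (hdisj t 0 ht).1
    obtain ⟨δ, d, hcd⟩ := exists_affine_of_injective_zmod_three c
      fun t t' hct => by_contra fun h => (hdisj t t' h).2 hct
    refine ⟨Fin.snoc (η 0) (-δ), d, Set.ext fun x => ?_⟩
    obtain ⟨y, t, rfl⟩ : ∃ y t, Fin.snoc y t = x := ⟨Fin.init x, _, Fin.snoc_init_self x⟩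
    rw [Fin.cons_snoc_eq_snoc_cons, snoc_mem_hyperplane_snoc_iff, Units.val_neg, neg_mul,
      sub_neg_eq_add, add_comm d, ← hcd, ← hη t]
    exact Set.ext_iff.1 (hslice t) y

theorem ncard_setOf_isMDS_zmod_three (k : ℕ) :
    {C : Set (Fin (k + 1) → ZMod 3) | IsMDS C}.ncard = 3 * 2 ^ k := by
  have : {C : Set (Fin (k + 1) → ZMod 3) | IsMDS C}
      = Set.range fun p : (Fin k → (ZMod 3)ˣ) × ZMod 3 => hyperplane (Fin.cons 1 p.1) p.2 := by
    ext C
    constructor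
    · intro hC
      obtain ⟨η, c, rfl⟩ := hC.exists_eq_hyperplane_cons_one
      exact ⟨(η, c), rfl⟩
    · rintro ⟨p, rfl⟩
      exact isMDS_hyperplane _ _
  rw [this, Set.ncard_range_of_injective hyperplane_cons_one_injective, Nat.card_eq_fintype_card,
    Fintype.card_prod, Fintype.card_fun, ZMod.card_units, ZMod.card, Fintype.card_fin]
  ring

end Hypercube

theorem count_MDS_q3 (m : ℕ) (hm : 1 ≤ m) :
    {S : Set (Fin m → Option (Fin 3)) | IsH m m (m - 1) (Fin 3) S}.ncard = 3 * 2 ^ (m - 1) := by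
  obtain ⟨k, rfl⟩ := Nat.exists_eq_add_of_le' hm
  rw [Hypercube.ncard_setOf_isH_eq_ncard_setOf_isMDS hm, Nat.add_sub_cancel]
  -- `Fin 3` and `ZMod 3` are the same type by definition.
  exact Hypercube.ncard_setOf_isMDS_zmod_three k
end
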